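/- For all real numbers p, q, r, s, if 2q − p² − q² = 2s − r² − s², −2p − 2q + p² − q² = −2r − 2s + r² − s², p² + q² = 1 and r² + s² = 1, then (p,q) = (r,s). In particular, the closing-equation system has no solution with (p,q) ≠ (r,s). -/
import Mathlib


/-- The closing-equation system for `X = (2 - 2y, 2x)`, `Y = (-2y - 2, 2 - 2x)`. -/
def closingSys16 (p q r s : ℝ) : Prop :=
  2 * q - p ^ 2 - q ^ 2 = 2 * s - r ^ 2 - s ^ 2 ∧
    -2 * p - 2 * q + p ^ 2 - q ^ 2 = -2 * r - 2 * s + r ^ 2 - s ^ 2 ∧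
    p ^ 2 + q ^ 2 = 1 ∧ r ^ 2 + s ^ 2 = 1

/-- Any solution of the closing-equation system has `(p,q) = (r,s)`; in particular there is
no solution with `(p,q) ≠ (r,s)`. -/
theorem closingSys16_no_solution :
    (∀ p q r s : ℝ, closingSys16 p q r s → (p, q) = (r, s)) ∧
    ¬∃ p q r s : ℝ, closingSys16 p q r s ∧ (p, q) ≠ (r, s) := by
  have main : ∀ p q r s : ℝ, closingSys16 p q r s → (p, q) = (r, s) := by
    intro p q r s ⟨h1, h2, h3, h4⟩
    have hq : q = s := by nlinarith
    subst hq
    have hpp : p ^ 2 = r ^ 2 := by linarith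
    have hp : p = r := by linarith
    simp [hp]
  exact ⟨main, fun ⟨p, q, r, s, hsys, hne⟩ => hne (main p q r s hsys)⟩
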